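/- arXiv:2309.01922 — 5 statements merged into one kernel-verified Lean document; each statement's English description precedes it below -/
import Mathlib

section
/- For finite state space S, action space A, stationary distributions d^π of policy π, and Q-function Q^{π'} of policy π' satisfying the average-reward Bellman equation, the difference of average rewards satisfies J^π − J^{π'} = Σ_s Σ_a d^π(s)(π(a|s) − π'(a|s)) Q^{π'}(s,a). -/
/-!
Average the Bellman equation for `Q'` against the state-action weights `d s * π s a`: the reward
term gives `Jπ`, the constant gives `Jπ'`, and stationarity of `d` under `π` turns the expected
next-state value back into `∑ s, d s * V' s`, where `V' s = ∑ a, π' s a * Q' s a`. Subtracting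
`∑ s, d s * V' s`, which is the same average taken with `π'`, gives the claim.
-/

open Finset

section

variable {S A R : Type*} [Fintype S] [Fintype A] [CommRing R]

theorem sum_mul_sum_transition_of_stationary (P : S → A → S → R) (π : S → A → R) {d : S → R}
    (hstat : ∀ s', ∑ s, d s * ∑ a, π s a * P s a s' = d s') (f : S → R) :
    ∑ s, d s * ∑ a, π s a * ∑ s', P s a s' * f s' = ∑ s', d s' * f s' := by
  calc ∑ s, d s * ∑ a, π s a * ∑ s', P s a s' * f s'
      = ∑ s', (∑ s, d s * ∑ a, π s a * P s a s') * f s' := by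
        simp only [mul_sum, sum_mul, mul_assoc]
        exact (sum_congr rfl fun s _ => sum_comm).trans sum_comm
    _ = ∑ s', d s' * f s' := by simp only [hstat]

theorem sum_mul_sum_policy_mul_const {π : S → A → R} {d : S → R}
    (hπ : ∀ s, ∑ a, π s a = 1) (hd : ∑ s, d s = 1) (c : R) :
    ∑ s, d s * ∑ a, π s a * c = c := by
  simp only [← sum_mul, hπ, one_mul, hd]

end

theorem stmt_0_general {S A : Type*} [Fintype S] [Fintype A]
    (P : S → A → S → ℝ) (r : S → A → ℝ)
    (π π' : S → A → ℝ)
    (hπ : ∀ s, ∑ a, π s a = 1)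
    (d : S → ℝ) (Jπ Jπ' : ℝ) (Q' : S → A → ℝ)
    (hd1 : ∑ s, d s = 1)
    (hstat : ∀ s', ∑ s, d s * ∑ a, π s a * P s a s' = d s')
    (hJ : Jπ = ∑ s, d s * ∑ a, π s a * r s a)
    (hbell : ∀ s a,
      Q' s a = r s a - Jπ' + ∑ s', P s a s' * (∑ a', π' s' a' * Q' s' a')) :
    Jπ - Jπ' = ∑ s, ∑ a, d s * (π s a - π' s a) * Q' s a := by
  let V' : S → ℝ := fun s => ∑ a, π' s a * Q' s a
  have hQ : ∑ s, d s * ∑ a, π s a * Q' s a = Jπ - Jπ' + ∑ s, d s * V' s :=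
    calc ∑ s, d s * ∑ a, π s a * Q' s a
        = ∑ s, d s * ∑ a, π s a * (r s a - Jπ' + ∑ s', P s a s' * V' s') :=
          sum_congr rfl fun s _ => congrArg _ <| sum_congr rfl fun a _ => by rw [hbell s a]
      _ = Jπ - Jπ' + ∑ s, d s * V' s := by
          simp only [mul_add, mul_sub, sum_add_distrib, sum_sub_distrib]
          rw [hJ, sum_mul_sum_policy_mul_const hπ hd1,
            sum_mul_sum_transition_of_stationary P π hstat]
  calc Jπ - Jπ' = ∑ s, d s * ∑ a, π s a * Q' s a - ∑ s, d s * V' s := by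
        rw [hQ]; ring
    _ = ∑ s, ∑ a, d s * (π s a - π' s a) * Q' s a := by
        simp only [V', ← sum_sub_distrib, mul_sum]
        exact sum_congr rfl fun s _ => sum_congr rfl fun a _ => by ring

/-- Performance difference lemma (Q-function form) for average-reward MDPs. -/
theorem stmt_0 {S A : Type*} [Fintype S] [Fintype A]
    (P : S → A → S → ℝ) (r : S → A → ℝ)
    (π π' : S → A → ℝ)
    (hπ : ∀ s, ∑ a, π s a = 1) (hπ' : ∀ s, ∑ a, π' s a = 1)
    (d : S → ℝ) (Jπ Jπ' : ℝ) (Q' : S → A → ℝ)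
    (hd1 : ∑ s, d s = 1)
    (hstat : ∀ s', ∑ s, d s * ∑ a, π s a * P s a s' = d s')
    (hJ : Jπ = ∑ s, d s * ∑ a, π s a * r s a)
    (hbell : ∀ s a,
      Q' s a = r s a - Jπ' + ∑ s', P s a s' * (∑ a', π' s' a' * Q' s' a')) :
    Jπ - Jπ' = ∑ s, ∑ a, d s * (π s a - π' s a) * Q' s a :=
  stmt_0_general P r π π' hπ d Jπ Jπ' Q' hd1 hstat hJ hbell
end

section
/- Under the same setup, the performance difference can be written using advantage functions: J^π − J^{π'} = E_{s∼d^π} E_{a∼π(·|s)}[A^{π'}(s,a)], where A^{π'}(s,a) = Q^{π'}(s,a) − V^{π'}(s). -/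
/-! Expand `Q^{π'}` by its Bellman equation: averaged over `a ∼ π(·|s)` and `s ∼ d^π`, the advantage
becomes `J^π − J^{π'} + E[V^{π'}(s')] − E[V^{π'}(s)]`, where `s'` is the successor of `s`. Since
`d^π` is stationary, `s'` is again distributed as `d^π`, so the two value terms cancel. -/

open Finset

section

variable {ι S A R : Type*} [Fintype ι] [Fintype S] [Fintype A] [CommRing R]

theorem sum_mul_sub_const_of_sum_eq_one {w : ι → R} (hw : ∑ i, w i = 1) (x : ι → R) (c : R) :
    ∑ i, w i * (x i - c) = ∑ i, w i * x i - c := by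
  simp only [mul_sub, sum_sub_distrib, ← sum_mul, hw, one_mul]

theorem sum_stationary_mul_sum_transition {P : S → A → S → R} {π : S → A → R} {d : S → R}
    (hstat : ∀ s', ∑ s, d s * ∑ a, π s a * P s a s' = d s') (f : S → R) :
    ∑ s, d s * ∑ a, π s a * ∑ s', P s a s' * f s' = ∑ s, d s * f s :=
  calc ∑ s, d s * ∑ a, π s a * ∑ s', P s a s' * f s'
      = ∑ s', (∑ s, d s * ∑ a, π s a * P s a s') * f s' := by
        simp only [mul_sum, sum_mul, mul_assoc]
        exact (sum_congr rfl fun _ _ => sum_comm).trans sum_comm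
    _ = ∑ s, d s * f s := by simp only [hstat]

end

theorem stmt_1_general {S A : Type*} [Fintype S] [Fintype A]
    (P : S → A → S → ℝ) (r : S → A → ℝ)
    (π : S → A → ℝ)
    (hπ : ∀ s, ∑ a, π s a = 1)
    (d : S → ℝ) (Jπ Jπ' : ℝ) (Q' : S → A → ℝ) (V' : S → ℝ)
    (hd1 : ∑ s, d s = 1)
    (hstat : ∀ s', ∑ s, d s * ∑ a, π s a * P s a s' = d s')
    (hJ : Jπ = ∑ s, d s * ∑ a, π s a * r s a)
    (hbell : ∀ s a, Q' s a = r s a - Jπ' + ∑ s', P s a s' * V' s') :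
    Jπ - Jπ' = ∑ s, d s * ∑ a, π s a * (Q' s a - V' s) := by
  have hadvantage : ∀ s, ∑ a, π s a * (Q' s a - V' s)
      = ∑ a, π s a * r s a + (∑ a, π s a * ∑ s', P s a s' * V' s' - V' s) - Jπ' := by
    intro s
    have hQ : ∀ a, Q' s a - V' s = (r s a + ∑ s', P s a s' * V' s') - (Jπ' + V' s) := fun a => by
      rw [hbell]; ring
    simp only [hQ, sum_mul_sub_const_of_sum_eq_one (hπ s), mul_add, sum_add_distrib]
    ring
  calc Jπ - Jπ'
      = ∑ s, d s * (∑ a, π s a * r s a + (∑ a, π s a * ∑ s', P s a s' * V' s' - V' s)) - Jπ' := by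
        simp only [mul_add, mul_sub, sum_add_distrib, sum_sub_distrib,
          sum_stationary_mul_sum_transition hstat, hJ, sub_self, add_zero]
    _ = ∑ s, d s * ∑ a, π s a * (Q' s a - V' s) := by
        simp only [hadvantage, sum_mul_sub_const_of_sum_eq_one hd1]

/-- Performance difference lemma (advantage form) for average-reward MDPs:
`J^π − J^{π'} = E_{s∼d^π} E_{a∼π(·|s)} [A^{π'}(s,a)]`. -/
theorem stmt_1 {S A : Type*} [Fintype S] [Fintype A]
    (P : S → A → S → ℝ) (r : S → A → ℝ)
    (π π' : S → A → ℝ)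
    (hπ : ∀ s, ∑ a, π s a = 1) (hπ' : ∀ s, ∑ a, π' s a = 1)
    (d : S → ℝ) (Jπ Jπ' : ℝ) (Q' : S → A → ℝ) (V' : S → ℝ)
    (hd1 : ∑ s, d s = 1)
    (hstat : ∀ s', ∑ s, d s * ∑ a, π s a * P s a s' = d s')
    (hJ : Jπ = ∑ s, d s * ∑ a, π s a * r s a)
    (hV : ∀ s, V' s = ∑ a, π' s a * Q' s a)
    (hbell : ∀ s a, Q' s a = r s a - Jπ' + ∑ s', P s a s' * V' s') :
    Jπ - Jπ' = ∑ s, d s * ∑ a, π s a * (Q' s a - V' s) :=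
  stmt_1_general P r π hπ d Jπ Jπ' Q' V' hd1 hstat hJ hbell
end

section
/- Policy gradient theorem for average reward: ∇_θ J(θ) = E_{s∼d^{π_θ}, a∼π_θ(·|s)}[Q^{π_θ}(s,a) ∇_θ log π_θ(a|s)], where d^{π_θ} is the stationary distribution and Q^{π_θ} satisfies the average-reward Bellman equation. -/
/-!
Write `q_θ(s,a) = r(s,a) + Σ_{s'} P(s'|s,a) V_θ(s')`. Averaging the Bellman equation
`Q_θ = q_θ - J(θ)` over `a ∼ π_θ(·|s)` gives `J(θ') = Σ_a π_θ'(a|s) q_θ'(s,a) - V_θ'(s)` for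
every state `s`, so `J` is a `d_θ`-average of functions whose gradients at `θ` only involve
`∇π_θ` and `∇V_θ`. The `∇V_θ` terms cancel by stationarity of `d_θ`, and the `J(θ) ∇π_θ`
terms vanish because `Σ_a ∇π_θ(a|s) = 0`.
-/

open Finset

namespace HasGradientAt

variable {F : Type*} [NormedAddCommGroup F] [InnerProductSpace ℝ F] [CompleteSpace F]
  {f g : F → ℝ} {f' g' x : F}

theorem sub (hf : HasGradientAt f f' x) (hg : HasGradientAt g g' x) :
    HasGradientAt (fun y => f y - g y) (f' - g') x := by
  rw [hasGradientAt_iff_hasFDerivAt] at *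
  simpa only [map_sub] using hf.fun_sub hg

theorem mul (hf : HasGradientAt f f' x) (hg : HasGradientAt g g' x) :
    HasGradientAt (fun y => f y * g y) (f x • g' + g x • f') x := by
  rw [hasGradientAt_iff_hasFDerivAt] at *
  simpa [map_add, map_smul] using hf.fun_mul hg

theorem const_mul (c : ℝ) (hf : HasGradientAt f f' x) :
    HasGradientAt (fun y => c * f y) (c • f') x := by
  rw [hasGradientAt_iff_hasFDerivAt] at *
  simpa [map_smul] using hf.const_mul c

theorem const_add (c : ℝ) (hf : HasGradientAt f f' x) :
    HasGradientAt (fun y => c + f y) f' x := by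
  rw [hasGradientAt_iff_hasFDerivAt] at *
  exact hf.const_add c

theorem sum {ι : Type*} {t : Finset ι} {f : ι → F → ℝ} {f' : ι → F}
    (hf : ∀ i ∈ t, HasGradientAt (f i) (f' i) x) :
    HasGradientAt (fun y => ∑ i ∈ t, f i y) (∑ i ∈ t, f' i) x := by
  rw [hasGradientAt_iff_hasFDerivAt]
  simpa [map_sum] using HasFDerivAt.fun_sum fun i hi => (hf i hi).hasFDerivAt

theorem sum_eq_zero_of_sum_const {ι : Type*} {t : Finset ι} {f : ι → F → ℝ} {f' : ι → F}
    {c : ℝ} (hc : ∀ y, ∑ i ∈ t, f i y = c) (hf : ∀ i ∈ t, HasGradientAt (f i) (f' i) x) :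
    ∑ i ∈ t, f' i = 0 := by
  refine (sum hf).unique ?_
  simpa only [hc] using hasGradientAt_const x c

end HasGradientAt

theorem eq_sum_mul_sub_sum_mul_of_sum_eq_one {ι : Type*} [Fintype ι] {p q u : ι → ℝ} {c : ℝ}
    (hp : ∑ i, p i = 1) (hu : ∀ i, u i = q i - c) :
    c = ∑ i, p i * q i - ∑ i, p i * u i := by
  simp only [hu, mul_sub, sum_sub_distrib, ← sum_mul, hp, one_mul, sub_sub_cancel]

theorem sum_add_const_smul_of_sum_eq_zero {ι R M : Type*} [Semiring R] [AddCommMonoid M]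
    [Module R M] {t : Finset ι} {f : ι → R} {g : ι → M} (c : R) (hg : ∑ i ∈ t, g i = 0) :
    ∑ i ∈ t, (f i + c) • g i = ∑ i ∈ t, f i • g i := by
  simp only [add_smul, sum_add_distrib, ← smul_sum, hg, smul_zero, add_zero]

section MDP

variable {S A : Type*} [Fintype S] [Fintype A]

theorem sum_smul_sum_smul_sum_smul_of_stationary {M : Type*} [AddCommMonoid M] [Module ℝ M]
    {d : S → ℝ} {π : S → A → ℝ} {P : S → A → S → ℝ}
    (hstat : ∀ s', ∑ s, d s * ∑ a, π s a * P s a s' = d s') (v : S → M) :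
    ∑ s, d s • ∑ a, π s a • ∑ s', P s a s' • v s' = ∑ s, d s • v s := by
  calc ∑ s, d s • ∑ a, π s a • ∑ s', P s a s' • v s'
      = ∑ s', (∑ s, d s * ∑ a, π s a * P s a s') • v s' := by
        simp only [smul_sum, sum_smul, mul_sum, mul_smul]
        exact (sum_congr rfl fun _ _ => sum_comm).trans sum_comm
    _ = ∑ s, d s • v s := by simp only [hstat]

variable {F : Type*} [NormedAddCommGroup F] [InnerProductSpace ℝ F] [CompleteSpace F]

theorem hasGradientAt_sum_mul_lookahead {P : A → S → ℝ} {r : A → ℝ} {π : F → A → ℝ}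
    {V : F → S → ℝ} {θ : F} {gπ : A → F} {gV : S → F}
    (hgπ : ∀ a, HasGradientAt (fun θ' => π θ' a) (gπ a) θ)
    (hgV : ∀ s, HasGradientAt (fun θ' => V θ' s) (gV s) θ) :
    HasGradientAt (fun θ' => ∑ a, π θ' a * (r a + ∑ s, P a s * V θ' s))
      (∑ a, (π θ a • ∑ s, P a s • gV s + (r a + ∑ s, P a s * V θ s) • gπ a)) θ :=
  .sum fun a _ =>
    (hgπ a).mul (.const_add _ (.sum fun s _ => (hgV s).const_mul (P a s)))

end MDP

/-- `(π θ s a)⁻¹ • gπ s a` plays the role of `∇_θ log π_θ(a|s)`. -/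
theorem stmt_3_general {S A : Type*} [Fintype S] [Fintype A] {n : ℕ}
    (P : S → A → S → ℝ) (r : S → A → ℝ)
    (π : EuclideanSpace ℝ (Fin n) → S → A → ℝ)
    (d : EuclideanSpace ℝ (Fin n) → S → ℝ)
    (J : EuclideanSpace ℝ (Fin n) → ℝ)
    (Q : EuclideanSpace ℝ (Fin n) → S → A → ℝ)
    (V : EuclideanSpace ℝ (Fin n) → S → ℝ)
    (θ : EuclideanSpace ℝ (Fin n))
    (gπ : S → A → EuclideanSpace ℝ (Fin n))
    (gV : S → EuclideanSpace ℝ (Fin n))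
    (hpos : ∀ θ' s a, 0 < π θ' s a)
    (hπsum : ∀ θ' s, ∑ a, π θ' s a = 1)
    (hd1 : ∀ θ', ∑ s, d θ' s = 1)
    (hstat : ∀ θ' s', ∑ s, d θ' s * ∑ a, π θ' s a * P s a s' = d θ' s')
    (hV : ∀ θ' s, V θ' s = ∑ a, π θ' s a * Q θ' s a)
    (hbell : ∀ θ' s a,
      Q θ' s a = r s a - J θ' + ∑ s', P s a s' * V θ' s')
    (hgπ : ∀ s a, HasGradientAt (fun θ' => π θ' s a) (gπ s a) θ)
    (hgV : ∀ s, HasGradientAt (fun θ' => V θ' s) (gV s) θ) :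
    HasGradientAt J
      (∑ s, d θ s • ∑ a, π θ s a • (Q θ s a • ((π θ s a)⁻¹ • gπ s a))) θ := by
  set q : EuclideanSpace ℝ (Fin n) → S → A → ℝ := fun θ' s a => r s a + ∑ s', P s a s' * V θ' s'
  have hJ_state : ∀ θ' s, J θ' = ∑ a, π θ' s a * q θ' s a - V θ' s := fun θ' s => by
    rw [hV]
    exact eq_sum_mul_sub_sum_mul_of_sum_eq_one (hπsum θ' s) fun a => by rw [hbell]; ring
  have hJ : J = fun θ' => ∑ s, d θ s * (∑ a, π θ' s a * q θ' s a - V θ' s) := by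
    funext θ'
    simp only [← hJ_state θ', ← sum_mul, hd1, one_mul]
  have hgrad := HasGradientAt.sum fun s (_ : s ∈ (univ : Finset S)) =>
    ((hasGradientAt_sum_mul_lookahead (P := P s) (r := r s) (hgπ s) hgV).sub
      (hgV s)).const_mul (d θ s)
  rw [hJ]
  convert hgrad using 1
  have hq : ∀ s, ∑ a, q θ s a • gπ s a = ∑ a, Q θ s a • gπ s a := fun s => by
    have hgπ_sum : ∑ a, gπ s a = 0 :=
      HasGradientAt.sum_eq_zero_of_sum_const (hπsum · s) fun a _ => hgπ s a
    have hqQ : ∀ a, q θ s a = Q θ s a + J θ := fun a => by rw [hbell]; ring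
    simp only [hqQ, sum_add_const_smul_of_sum_eq_zero _ hgπ_sum]
  symm
  calc _ = ∑ s, d θ s • ∑ a, π θ s a • ∑ s', P s a s' • gV s'
          + ∑ s, d θ s • ∑ a, q θ s a • gπ s a - ∑ s, d θ s • gV s := by
        simp only [sum_add_distrib, smul_sub, smul_add, sum_sub_distrib]
        rfl
    _ = ∑ s, d θ s • ∑ a, Q θ s a • gπ s a := by
        rw [sum_smul_sum_smul_sum_smul_of_stationary (hstat θ), add_sub_cancel_left]
        simp only [hq]
    _ = ∑ s, d θ s • ∑ a, π θ s a • (Q θ s a • ((π θ s a)⁻¹ • gπ s a)) := by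
        simp only [smul_comm (π θ _ _) (Q θ _ _), smul_inv_smul₀ (hpos θ _ _).ne']

/-- Policy gradient theorem for the average reward criterion:
`∇_θ J(θ) = E_{s∼d^{π_θ}, a∼π_θ(·|s)} [Q^{π_θ}(s,a) ∇_θ log π_θ(a|s)]`.
Since `π_θ(a|s) • ∇_θ log π_θ(a|s) = ∇_θ π_θ(a|s)`, the gradient is expressed
using the gradients `gπ` of the policy probabilities. -/
theorem stmt_3 {S A : Type*} [Fintype S] [Fintype A] {n : ℕ}
    (P : S → A → S → ℝ) (r : S → A → ℝ)
    (π : EuclideanSpace ℝ (Fin n) → S → A → ℝ)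
    (d : EuclideanSpace ℝ (Fin n) → S → ℝ)
    (J : EuclideanSpace ℝ (Fin n) → ℝ)
    (Q : EuclideanSpace ℝ (Fin n) → S → A → ℝ)
    (V : EuclideanSpace ℝ (Fin n) → S → ℝ)
    (θ : EuclideanSpace ℝ (Fin n))
    (gπ : S → A → EuclideanSpace ℝ (Fin n))
    (gV : S → EuclideanSpace ℝ (Fin n))
    (hpos : ∀ θ' s a, 0 < π θ' s a)
    (hπsum : ∀ θ' s, ∑ a, π θ' s a = 1)
    (hd1 : ∀ θ', ∑ s, d θ' s = 1)
    (hstat : ∀ θ' s', ∑ s, d θ' s * ∑ a, π θ' s a * P s a s' = d θ' s')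
    (hJ : ∀ θ', J θ' = ∑ s, d θ' s * ∑ a, π θ' s a * r s a)
    (hV : ∀ θ' s, V θ' s = ∑ a, π θ' s a * Q θ' s a)
    (hbell : ∀ θ' s a,
      Q θ' s a = r s a - J θ' + ∑ s', P s a s' * V θ' s')
    (hgπ : ∀ s a, HasGradientAt (fun θ' => π θ' s a) (gπ s a) θ)
    (hgV : ∀ s, HasGradientAt (fun θ' => V θ' s) (gV s) θ) :
    HasGradientAt J
      (∑ s, d θ s • ∑ a, π θ s a • (Q θ s a • ((π θ s a)⁻¹ • gπ s a))) θ :=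
  stmt_3_general P r π d J Q V θ gπ gV hpos hπsum hd1 hstat hV hbell hgπ hgV
end

section
/- Let J : ℝ^d → ℝ be L-smooth with |J(θ)| ≤ 1 for all θ, and let θ_{k+1} = θ_k + α ω_k with α = 1/(4L). Then (1/K) Σ_{k=1}^{K} ‖∇J(θ_k)‖² ≤ 16L/K + (16/3K) Σ_{k=1}^{K} ‖∇J(θ_k) − ω_k‖². -/
/-!
For an `L`-smooth function the first-order Taylor error is at most `L ‖y - x‖²`, so a step of
length `α ≤ 1 / (2L)` along `ω` increases `J` by at least `α/2 (‖∇J‖² - ‖∇J - ω‖²)`, the identity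
`2 ⟪g, ω⟫ = ‖g‖² - ‖g - ω‖² + ‖ω‖²` absorbing the quadratic term. Summing over the iterates, the
increments telescope to a difference of two values of `J`, which is at most `2` since `|J| ≤ 1`.
-/

open Finset InnerProductSpace

open scoped RealInnerProductSpace

theorem norm_sub_sub_le_of_lipschitz_fderiv {E F : Type*} [NormedAddCommGroup E] [NormedSpace ℝ E]
    [NormedAddCommGroup F] [NormedSpace ℝ F] {f : E → F} {f' : E → E →L[ℝ] F} {L : ℝ}
    (hL : 0 ≤ L) (hf : ∀ x, HasFDerivAt f (f' x) x) (hlip : ∀ x y, ‖f' x - f' y‖ ≤ L * ‖x - y‖)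
    (x y : E) : ‖f y - f x - f' x (y - x)‖ ≤ L * ‖y - x‖ ^ 2 := by
  have hbound : ∀ z ∈ Metric.closedBall x ‖y - x‖, ‖f' z - f' x‖ ≤ L * ‖y - x‖ := fun z hz =>
    (hlip z x).trans (mul_le_mul_of_nonneg_left (by rwa [← dist_eq_norm]) hL)
  calc ‖f y - f x - f' x (y - x)‖ ≤ L * ‖y - x‖ * ‖y - x‖ :=
        (convex_closedBall x _).norm_image_sub_le_of_norm_hasFDerivWithin_le'
          (fun z _ => (hf z).hasFDerivWithinAt) hbound
          (Metric.mem_closedBall_self (norm_nonneg _)) (by simp [dist_eq_norm])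
    _ = L * ‖y - x‖ ^ 2 := by ring

section Gradient

variable {E : Type*} [NormedAddCommGroup E] [InnerProductSpace ℝ E] [CompleteSpace E]
  {f : E → ℝ} {f' : E → E} {L α : ℝ}

theorem abs_sub_sub_inner_le_of_lipschitz_gradient (hL : 0 ≤ L)
    (hf : ∀ x, HasGradientAt f (f' x) x) (hlip : ∀ x y, ‖f' x - f' y‖ ≤ L * ‖x - y‖) (x y : E) :
    |f y - f x - ⟪f' x, y - x⟫| ≤ L * ‖y - x‖ ^ 2 := by
  have hlip' : ∀ x y, ‖toDual ℝ E (f' x) - toDual ℝ E (f' y)‖ ≤ L * ‖x - y‖ := fun x y => by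
    rw [← map_sub, LinearIsometryEquiv.norm_map]
    exact hlip x y
  simpa [toDual_apply_apply, Real.norm_eq_abs] using
    norm_sub_sub_le_of_lipschitz_fderiv hL (fun x => (hf x).hasFDerivAt) hlip' x y

theorem half_mul_sub_le_sub_add_smul (hL : 0 ≤ L) (hα : 0 ≤ α) (hαL : 2 * L * α ≤ 1)
    (hf : ∀ x, HasGradientAt f (f' x) x) (hlip : ∀ x y, ‖f' x - f' y‖ ≤ L * ‖x - y‖) (x ω : E) :
    α / 2 * (‖f' x‖ ^ 2 - ‖f' x - ω‖ ^ 2) ≤ f (x + α • ω) - f x := by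
  have hdescent := (abs_le.mp (abs_sub_sub_inner_le_of_lipschitz_gradient hL hf hlip x
    (x + α • ω))).1
  rw [add_sub_cancel_left, real_inner_smul_right, norm_smul, Real.norm_eq_abs, abs_of_nonneg hα]
    at hdescent
  have hquad : L * α * (α * ‖ω‖ ^ 2) ≤ 1 / 2 * (α * ‖ω‖ ^ 2) :=
    mul_le_mul_of_nonneg_right (by linarith) (by positivity)
  nlinarith [norm_sub_sq_real (f' x) ω]

theorem sum_sq_norm_gradient_le_of_ascent {B : ℝ} (hL : 0 ≤ L) (hα : 0 < α)
    (hαL : 2 * L * α ≤ 1) (hf : ∀ x, HasGradientAt f (f' x) x)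
    (hlip : ∀ x y, ‖f' x - f' y‖ ≤ L * ‖x - y‖) (hbdd : ∀ x, |f x| ≤ B) {θ ω : ℕ → E}
    (hupd : ∀ k, θ (k + 1) = θ k + α • ω k) (K : ℕ) :
    ∑ k ∈ Icc 1 K, ‖f' (θ k)‖ ^ 2 ≤ 4 * B / α + ∑ k ∈ Icc 1 K, ‖f' (θ k) - ω k‖ ^ 2 := by
  have htelescope : α / 2 * ∑ k ∈ Icc 1 K, (‖f' (θ k)‖ ^ 2 - ‖f' (θ k) - ω k‖ ^ 2)
      ≤ f (θ (K + 1)) - f (θ 1) :=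
    calc α / 2 * ∑ k ∈ Icc 1 K, (‖f' (θ k)‖ ^ 2 - ‖f' (θ k) - ω k‖ ^ 2)
        ≤ ∑ k ∈ Icc 1 K, (f (θ (k + 1)) - f (θ k)) := by
          rw [mul_sum]
          gcongr with k
          rw [hupd k]
          exact half_mul_sub_le_sub_add_smul hL hα.le hαL hf hlip _ _
      _ = f (θ (K + 1)) - f (θ 1) := by
          rw [← Ico_add_one_right_eq_Icc]
          exact sum_Ico_sub (fun k => f (θ k)) (by omega)
  have hB : f (θ (K + 1)) - f (θ 1) ≤ 2 * B := by
    linarith [(abs_le.mp (hbdd (θ (K + 1)))).2, (abs_le.mp (hbdd (θ 1))).1]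
  have hsum : ∑ k ∈ Icc 1 K, (‖f' (θ k)‖ ^ 2 - ‖f' (θ k) - ω k‖ ^ 2) ≤ 4 * B / α := by
    rw [le_div_iff₀ hα]
    linarith
  rw [sum_sub_distrib] at hsum
  linarith

end Gradient

theorem stmt_5_general {n : ℕ}
    (J : EuclideanSpace ℝ (Fin n) → ℝ)
    (gJ : EuclideanSpace ℝ (Fin n) → EuclideanSpace ℝ (Fin n))
    (L : ℝ) (hL : 0 < L)
    (hgrad : ∀ x, HasGradientAt J (gJ x) x)
    (hlip : ∀ x y, ‖gJ x - gJ y‖ ≤ L * ‖x - y‖)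
    (hbdd : ∀ x, |J x| ≤ 1)
    (θ ω : ℕ → EuclideanSpace ℝ (Fin n))
    (hupd : ∀ k, θ (k + 1) = θ k + (1 / (4 * L)) • ω k)
    (K : ℕ) :
    (1 / (K : ℝ)) * ∑ k ∈ Finset.Icc 1 K, ‖gJ (θ k)‖ ^ 2
      ≤ 16 * L / (K : ℝ)
        + (16 / (3 * (K : ℝ))) * ∑ k ∈ Finset.Icc 1 K, ‖gJ (θ k) - ω k‖ ^ 2 := by
  have hstep : 2 * L * (1 / (4 * L)) ≤ 1 := by
    rw [show 2 * L * (1 / (4 * L)) = 1 / 2 by field_simp; ring]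
    norm_num
  have hsum := sum_sq_norm_gradient_le_of_ascent hL.le (by positivity) hstep hgrad hlip hbdd
    hupd K
  rw [show 4 * 1 / (1 / (4 * L)) = 16 * L by field_simp; ring] at hsum
  have herr : 0 ≤ ∑ k ∈ Icc 1 K, ‖gJ (θ k) - ω k‖ ^ 2 := sum_nonneg fun _ _ => by positivity
  -- for `K = 0` both sides vanish, as `1 / 0 = 0`
  calc (1 / (K : ℝ)) * ∑ k ∈ Icc 1 K, ‖gJ (θ k)‖ ^ 2
      ≤ 1 / K * (16 * L + 16 / 3 * ∑ k ∈ Icc 1 K, ‖gJ (θ k) - ω k‖ ^ 2) := by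
        gcongr
        linarith
    _ = _ := by ring

/-- Averaged gradient-norm bound for the approximate gradient ascent
`θ_{k+1} = θ_k + (1/(4L)) ω_k` on an `L`-smooth objective bounded by `1`:
`(1/K) Σ_{k=1}^K ‖∇J(θ_k)‖² ≤ 16L/K + (16/(3K)) Σ_{k=1}^K ‖∇J(θ_k) − ω_k‖²`. -/
theorem stmt_5 {n : ℕ}
    (J : EuclideanSpace ℝ (Fin n) → ℝ)
    (gJ : EuclideanSpace ℝ (Fin n) → EuclideanSpace ℝ (Fin n))
    (L : ℝ) (hL : 0 < L)
    (hgrad : ∀ x, HasGradientAt J (gJ x) x)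
    (hlip : ∀ x y, ‖gJ x - gJ y‖ ≤ L * ‖x - y‖)
    (hbdd : ∀ x, |J x| ≤ 1)
    (θ ω : ℕ → EuclideanSpace ℝ (Fin n))
    (hupd : ∀ k, θ (k + 1) = θ k + (1 / (4 * L)) • ω k)
    (K : ℕ) (hK : 1 ≤ K) :
    (1 / (K : ℝ)) * ∑ k ∈ Finset.Icc 1 K, ‖gJ (θ k)‖ ^ 2
      ≤ 16 * L / (K : ℝ)
        + (16 / (3 * (K : ℝ))) * ∑ k ∈ Finset.Icc 1 K, ‖gJ (θ k) - ω k‖ ^ 2 :=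
  stmt_5_general J gJ L hL hgrad hlip hbdd θ ω hupd K
end

section
/- If a probability distribution over the number of successes M satisfies Pr(M ≤ M₀) ≤ δ and Pr(M > 0) ≥ 1 − δ for some δ ∈ [0, 1/2] and M₀ ≥ 1, then E[1/M | M > 0] ≤ (δ + 1/M₀)/(1 − δ). -/
/-!
Split `E[1/M; M > 0] = ∑_{m ≥ 1} p m / m` at `M₀`: for `m ≤ M₀` bound `1/m` by `1`, so these
terms contribute at most `Pr(M ≤ M₀) ≤ δ`; for `m > M₀` bound `1/m` by `1/(M₀ + 1)`, so the tail
contributes at most `1/M₀`. Dividing by `Pr(M > 0) ≥ 1 - δ > 0` gives the claim.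
-/

open Finset

lemma one_div_nat_succ_mul_le (m : ℕ) {x : ℝ} (hx : 0 ≤ x) : 1 / ((m : ℝ) + 1) * x ≤ x :=
  mul_le_of_le_one_left hx <|
    div_le_one_of_le₀ (by linarith [m.cast_nonneg (α := ℝ)]) (by positivity)

lemma summable_one_div_nat_succ_mul {q : ℕ → ℝ} (hq : ∀ m, 0 ≤ q m) (hs : Summable q) :
    Summable fun m : ℕ => 1 / ((m : ℝ) + 1) * q m :=
  hs.of_nonneg_of_le (fun m => mul_nonneg (by positivity) (hq m))
    (fun m => one_div_nat_succ_mul_le m (hq m))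

lemma tsum_one_div_nat_succ_mul_le {q : ℕ → ℝ} (hq : ∀ m, 0 ≤ q m) (hs : Summable q) (N : ℕ) :
    ∑' m : ℕ, 1 / ((m : ℝ) + 1) * q m ≤ ∑ m ∈ range N, q m + (∑' m, q m) / (N + 1) := by
  rw [← (summable_one_div_nat_succ_mul hq hs).sum_add_tsum_nat_add N]
  have hhead : ∑ m ∈ range N, 1 / ((m : ℝ) + 1) * q m ≤ ∑ m ∈ range N, q m :=
    sum_le_sum fun m _ => one_div_nat_succ_mul_le m (hq m)
  have htail : ∑' m : ℕ, 1 / (((m + N : ℕ) : ℝ) + 1) * q (m + N) ≤ (∑' m, q m) / (N + 1) := by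
    have hshift : Summable fun m => q (m + N) := (summable_nat_add_iff N).mpr hs
    calc ∑' m : ℕ, 1 / (((m + N : ℕ) : ℝ) + 1) * q (m + N)
        ≤ ∑' m : ℕ, q (m + N) / (N + 1) := by
          refine Summable.tsum_le_tsum (fun m => ?_)
            ((summable_nat_add_iff N).mpr (summable_one_div_nat_succ_mul hq hs)) (hshift.div_const _)
          rw [one_div_mul_eq_div]
          gcongr
          · exact hq _
          · linarith
      _ = (∑' m : ℕ, q (m + N)) / (N + 1) := tsum_div_const
      _ ≤ (∑' m, q m) / (N + 1) :=
          div_le_div_of_nonneg_right (tsum_comp_le_tsum_of_inj hs hq (add_left_injective N))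
            (by positivity)
  linarith

theorem stmt_14_general (p : ℕ → ℝ) (δ : ℝ) (M₀ : ℕ)
    (hp : ∀ m, 0 ≤ p m) (hsum : Summable p) (htot : ∑' m, p m = 1)
    (hδ1 : δ ≤ 1 / 2) (hM₀ : 1 ≤ M₀)
    (hsmall : ∑ m ∈ Finset.range (M₀ + 1), p m ≤ δ)
    (hpos : 1 - δ ≤ ∑' m, p (m + 1)) :
    (∑' m : ℕ, (1 / ((m : ℝ) + 1)) * p (m + 1)) / (∑' m, p (m + 1))
      ≤ (δ + 1 / (M₀ : ℝ)) / (1 - δ) := by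
  have hsum' : Summable fun m => p (m + 1) := (summable_nat_add_iff 1).mpr hsum
  have hhead : ∑ m ∈ range M₀, p (m + 1) ≤ δ := by
    rw [sum_range_succ'] at hsmall
    linarith [hp 0]
  have htail : ∑' m, p (m + 1) ≤ 1 := by
    rw [← htot, hsum.tsum_eq_zero_add]
    linarith [hp 0]
  have hnum : ∑' m : ℕ, 1 / ((m : ℝ) + 1) * p (m + 1) ≤ δ + 1 / (M₀ : ℝ) := by
    calc _ ≤ ∑ m ∈ range M₀, p (m + 1) + (∑' m, p (m + 1)) / (M₀ + 1) :=
          tsum_one_div_nat_succ_mul_le (fun m => hp _) hsum' M₀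
      _ ≤ δ + 1 / (M₀ : ℝ) := by
          have hM₀' : (0 : ℝ) < M₀ := by exact_mod_cast hM₀
          refine add_le_add hhead ?_
          calc (∑' m, p (m + 1)) / (M₀ + 1) ≤ 1 / (M₀ + 1) := by gcongr
            _ ≤ 1 / M₀ := by gcongr; linarith
  exact div_le_div₀ (hnum.trans' (tsum_nonneg fun m => mul_nonneg (by positivity) (hp _))) hnum
    (by linarith) hpos

/-- Bound on the conditional expectation of `1/M` given `M > 0`: if
`Pr(M ≤ M₀) ≤ δ` and `Pr(M > 0) ≥ 1 − δ` with `δ ∈ [0, 1/2]` and `M₀ ≥ 1`, then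
`E[1/M | M > 0] ≤ (δ + 1/M₀)/(1 − δ)`. -/
theorem stmt_14 (p : ℕ → ℝ) (δ : ℝ) (M₀ : ℕ)
    (hp : ∀ m, 0 ≤ p m) (hsum : Summable p) (htot : ∑' m, p m = 1)
    (hδ0 : 0 ≤ δ) (hδ1 : δ ≤ 1 / 2) (hM₀ : 1 ≤ M₀)
    (hsmall : ∑ m ∈ Finset.range (M₀ + 1), p m ≤ δ)
    (hpos : 1 - δ ≤ ∑' m, p (m + 1)) :
    (∑' m : ℕ, (1 / ((m : ℝ) + 1)) * p (m + 1)) / (∑' m, p (m + 1))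
      ≤ (δ + 1 / (M₀ : ℝ)) / (1 - δ) :=
  stmt_14_general p δ M₀ hp hsum htot hδ1 hM₀ hsmall hpos
end
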